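/- (Uniqueness of the maximal triangulation of the junior simplex.) Let B ⊆ s_G ∩ N be an r-element affinely independent set with conv(B) ∩ N = B (i.e. conv(B) is an elementary (r−1)-simplex all of whose vertices are lattice points of the junior simplex). Then either B = {n^(j−1), n^(j)} ∪ {e_ξ : ξ ∈ S} for some j with 1 ≤ j ≤ ν and some (r−2)-element subset S ⊆ {1,…,r−1}, or (r−1) does not divide l and B = {n^(ν), e_1, …, e_{r−1}}. -/

import Mathlib

/-!
The lattice points of the junior simplex are the vertices `e_1, …, e_{r-1}` of its base face and
the points `e_r = n⁽⁰⁾, n⁽¹⁾, …, n⁽ᵛ⁾`, which lie in this order on the segment from `e_r` to the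
centroid `c` of the base face; this is because the first `r - 1` coordinates of a lattice point
share the fractional part `j / l`. By affine independence `B` contains no three of the `n⁽ʲ⁾`.
If it contains two, they are consecutive, since an intermediate `n⁽ʲ⁾` would be a lattice point
of `conv B`, hence a third one in `B`. Counting, `B` contains at least one `n⁽ʲ⁾`; if only one,
then it contains all `e_ξ`, so `c` and `n⁽ʲ⁺¹⁾` lie in `conv B`, which forces `j = ν`, and
`n⁽ᵛ⁾ ≠ c` by affine independence, i.e. `(r - 1) ∤ l`.
-/

noncomputable section

/-- the generator `(1/l)(1,…,1,l−(r−1))` of the lattice of weights -/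
def wgt (l r : ℕ) : Fin r → ℚ :=
  fun i => (if (i : ℕ) + 1 = r then (l : ℚ) - ((r : ℚ) - 1) else 1) / l

/-- membership in the lattice `N = ℤ^r + ℤ·(1/l)(1,…,1,l−(r−1))` -/
def memN (l r : ℕ) (v : Fin r → ℚ) : Prop :=
  ∃ (a : Fin r → ℤ) (c : ℤ), v = (fun i => (a i : ℚ)) + c • wgt l r

/-- the point `n⁽ʲ⁾ = (1/l)(j,…,j,l−j(r−1))` -/
def nj (l r j : ℕ) : Fin r → ℚ :=
  fun i => (if (i : ℕ) + 1 = r then (l : ℚ) - (j : ℚ) * ((r : ℚ) - 1) else (j : ℚ)) / l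

open Finset

theorem AffineIndependent.notMem_convexHull_sdiff_singleton {k E : Type*} [Field k]
    [LinearOrder k] [IsStrictOrderedRing k] [AddCommGroup E] [Module k E] {s : Set E}
    (hs : AffineIndependent k ((↑) : s → E)) {v : E} (hv : v ∈ s) :
    v ∉ convexHull k (s \ {v}) := by
  intro h
  apply hs.notMem_affineSpan_sdiff ⟨v, hv⟩ Set.univ
  have himage : ((↑) : s → E) '' (Set.univ \ {⟨v, hv⟩}) = s \ {v} := by
    ext w
    simp
  exact himage ▸ convexHull_subset_affineSpan _ h

section Pi

variable {ι M : Type*}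

theorem Pi.eq_of_sum_eq_of_forall_ne [Fintype ι] [AddCommGroup M] {v w : ι → M} (e : ι)
    (hne : ∀ i ≠ e, v i = w i) (hsum : ∑ i, v i = ∑ i, w i) : v = w := by
  classical
  have hoff : ∑ i ∈ univ.erase e, v i = ∑ i ∈ univ.erase e, w i :=
    sum_congr rfl fun i hi => hne i (ne_of_mem_erase hi)
  funext i
  by_cases hi : i = e
  · subst hi
    rw [← add_sum_erase _ _ (mem_univ i), ← add_sum_erase _ _ (mem_univ i), hoff] at hsum
    exact add_right_cancel hsum
  · exact hne i hi

theorem Pi.eq_single_of_nonneg_of_apply_eq_sum [Fintype ι] [DecidableEq ι] [AddCommGroup M]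
    [PartialOrder M] [IsOrderedAddMonoid M] {v : ι → M} (hv : ∀ i, 0 ≤ v i) {ξ : ι}
    (hξ : v ξ = ∑ i, v i) :
    v = Pi.single ξ (v ξ) := by
  have hrest : ∑ i ∈ univ.erase ξ, v i = 0 := by
    rw [← add_sum_erase _ _ (mem_univ ξ)] at hξ
    exact add_eq_left.mp hξ.symm
  funext i
  by_cases hi : i = ξ
  · subst hi; simp
  · rw [Pi.single_eq_of_ne hi]
    exact (sum_eq_zero_iff_of_nonneg fun j _ => hv j).mp hrest i
      (mem_erase.mpr ⟨hi, mem_univ i⟩)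

theorem Pi.single_left_injective [DecidableEq ι] [Zero M] {m : M} (hm : m ≠ 0) :
    Function.Injective fun i : ι => (Pi.single i m : ι → M) := by
  intro i j hij
  by_contra hne
  simpa [hne, hm] using congrFun hij i

end Pi

-- The line through the points `n⁽ʲ⁾`; it meets the base face at its centroid
-- `njLine r (1 / (r - 1))`.
def njLine (r : ℕ) (s : ℚ) : Fin r → ℚ :=
  fun i => if (i : ℕ) + 1 = r then 1 - s * (r - 1) else s

section Junior

variable {l r : ℕ} {B : Finset (Fin r → ℚ)}

theorem nj_eq_njLine (hl : l ≠ 0) (j : ℕ) : nj l r j = njLine r (j / l) := by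
  funext i
  simp only [nj, njLine]
  split_ifs <;> field_simp

theorem njLine_mem_segment {s t u : ℚ} (hst : s ≤ t) (htu : t ≤ u) :
    njLine r t ∈ segment ℚ (njLine r s) (njLine r u) := by
  let f : ℚ →ᵃ[ℚ] Fin r → ℚ := AffineMap.lineMap (njLine r 0) (njLine r 1)
  have hf : ∀ x, f x = njLine r x := fun x => by
    funext i
    simp only [f, AffineMap.lineMap_apply_module', Pi.add_apply, Pi.smul_apply, Pi.sub_apply,
      smul_eq_mul, njLine]
    split_ifs <;> ring
  rw [← hf, ← hf, ← hf, ← image_segment, segment_eq_Icc (hst.trans htu)]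
  exact Set.mem_image_of_mem f ⟨hst, htu⟩

theorem sum_njLine (hr : 1 ≤ r) (s : ℚ) : ∑ i, njLine r s i = 1 := by
  obtain ⟨n, rfl⟩ := Nat.exists_eq_add_of_le' hr
  have hlt (i : Fin n) : (i : ℕ) ≠ n := i.isLt.ne
  rw [Fin.sum_univ_castSucc]
  simp [njLine, hlt]
  ring

theorem card_filter_val_add_one_ne (hr : 1 ≤ r) :
    #{i : Fin r | (i : ℕ) + 1 ≠ r} = r - 1 := by
  obtain ⟨n, rfl⟩ := Nat.exists_eq_add_of_le' hr
  have : ({i : Fin (n + 1) | (i : ℕ) + 1 ≠ n + 1} : Finset _) = univ.erase (Fin.last n) := by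
    ext i
    simp [Fin.ext_iff]
  rw [this, card_erase_of_mem (mem_univ _), card_fin]

theorem njLine_mem_convexHull_face (hr : 2 ≤ r) :
    njLine r (1 / (r - 1)) ∈
      convexHull ℚ (({i : Fin r | (i : ℕ) + 1 ≠ r} : Finset _).image
        (fun ξ => (Pi.single ξ 1 : Fin r → ℚ)) : Set (Fin r → ℚ)) := by
  set F : Finset (Fin r) := {i : Fin r | (i : ℕ) + 1 ≠ r}
  have hcard : (#F : ℚ) = r - 1 := by
    rw [card_filter_val_add_one_ne (by omega), Nat.cast_sub (by omega)]
    simp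
  have hpos : (0 : ℚ) < #F := by
    rw [hcard, sub_pos]
    exact_mod_cast hr
  convert F.centerMass_mem_convexHull (w := fun _ => (1 : ℚ)) (fun _ _ => zero_le_one)
    (by simpa using hpos) (fun ξ hξ => Finset.mem_coe.2 (Finset.mem_image_of_mem _ hξ)) using 1
  funext i
  simp only [centerMass, sum_const, nsmul_eq_mul, mul_one, one_smul, Pi.smul_apply,
    Finset.sum_apply, Pi.single_apply, sum_ite_eq, smul_eq_mul, njLine, hcard, F, mem_filter_univ]
  have hr1 : (r : ℚ) - 1 ≠ 0 := by rw [← hcard]; exact hpos.ne'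
  by_cases hi : (i : ℕ) + 1 = r
  · simp [hi, hr1]
  · simp [hi]

theorem nj_injective (hr : 2 ≤ r) (hl : l ≠ 0) : Function.Injective (nj l r) := by
  intro j j' h
  have h0 := congrFun h ⟨0, by omega⟩
  simp only [nj, show (0 : ℕ) + 1 ≠ r by omega, if_false] at h0
  field_simp at h0
  exact_mod_cast h0

theorem sum_nj (hr : 1 ≤ r) (hl : l ≠ 0) (j : ℕ) : ∑ i, nj l r j i = 1 := by
  rw [nj_eq_njLine hl, sum_njLine hr]

theorem memN_nj (hl : l ≠ 0) (j : ℕ) : memN l r (nj l r j) := by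
  refine ⟨fun i => if (i : ℕ) + 1 = r then 1 - j else 0, j, ?_⟩
  funext i
  rw [Pi.add_apply, Pi.smul_apply]
  simp only [nj, wgt, zsmul_eq_mul]
  split_ifs <;> push_cast <;> field_simp <;> ring

theorem le_div_of_nj_nonneg (hr : 2 ≤ r) (hl : l ≠ 0) {j : ℕ} (h : ∀ i, 0 ≤ nj l r j i) :
    j ≤ l / (r - 1) := by
  have hlast := h ⟨r - 1, by omega⟩
  simp only [nj, show r - 1 + 1 = r by omega, if_true] at hlast
  rw [le_div_iff₀ (by positivity), zero_mul, sub_nonneg] at hlast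
  rw [Nat.le_div_iff_mul_le (by omega)]
  exact_mod_cast (by push_cast [Nat.cast_sub (by omega : 1 ≤ r)]; linarith :
    ((j * (r - 1) : ℕ) : ℚ) ≤ l)

theorem exists_eq_intCast_add_div_of_memN (hl : l ≠ 0) {v : Fin r → ℚ} (hv : memN l r v) :
    ∃ j < l, ∀ i : Fin r, (i : ℕ) + 1 ≠ r → ∃ k : ℤ, v i = k + j / l := by
  obtain ⟨a, c, rfl⟩ := hv
  have hl' : (0 : ℤ) < l := by exact_mod_cast Nat.pos_of_ne_zero hl
  obtain ⟨j, hj⟩ := Int.eq_ofNat_of_zero_le (Int.emod_nonneg c hl'.ne')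
  refine ⟨j, by have := Int.emod_lt_of_pos c hl'; omega, fun i hi => ⟨a i + c / l, ?_⟩⟩
  have hc : (c : ℚ) = j + l * ((c / l : ℤ) : ℚ) := by
    have hdiv := Int.emod_add_mul_ediv c l
    rw [hj] at hdiv
    exact_mod_cast hdiv.symm
  rw [Pi.add_apply, Pi.smul_apply]
  simp only [wgt, hi, if_false, zsmul_eq_mul]
  rw [hc]
  push_cast
  field_simp
  ring

theorem Int.eq_zero_or_of_add_div_mem_Icc {k : ℤ} {j l : ℕ} (hjl : j < l)
    (h0 : 0 ≤ (k : ℚ) + j / l) (h1 : (k : ℚ) + j / l ≤ 1) : k = 0 ∨ k = 1 ∧ j = 0 := by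
  have hl : (0 : ℚ) < l := by exact_mod_cast (Nat.zero_le j).trans_lt hjl
  have hf0 : (0 : ℚ) ≤ j / l := by positivity
  have hf1 : (j : ℚ) / l < 1 := (div_lt_one hl).2 (by exact_mod_cast hjl)
  have hk0 : -1 < k := by exact_mod_cast (by linarith : (-1 : ℚ) < k)
  have hk1 : k ≤ 1 := by exact_mod_cast (by linarith : (k : ℚ) ≤ 1)
  rcases (by omega : k = 0 ∨ k = 1) with rfl | rfl
  · exact .inl rfl
  · refine .inr ⟨rfl, ?_⟩
    have : (j : ℚ) / l ≤ 0 := by push_cast at h1; linarith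
    rw [div_le_iff₀ hl, zero_mul] at this
    exact_mod_cast this.antisymm (Nat.cast_nonneg j)

def IsJuniorLatticePoint (l r : ℕ) (v : Fin r → ℚ) : Prop :=
  memN l r v ∧ (∀ i, 0 ≤ v i) ∧ ∑ i, v i = 1

theorem IsJuniorLatticePoint.eq_nj_or_eq_single (hr : 2 ≤ r) (hl : l ≠ 0) {v : Fin r → ℚ}
    (hv : IsJuniorLatticePoint l r v) :
    (∃ j ≤ l / (r - 1), v = nj l r j) ∨
      ∃ ξ : Fin r, (ξ : ℕ) + 1 ≠ r ∧ v = Pi.single ξ 1 := by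
  obtain ⟨hN, hpos, hsum⟩ := hv
  obtain ⟨j, hjl, hfrac⟩ := exists_eq_intCast_add_div_of_memN hl hN
  by_cases hone : ∃ ξ : Fin r, (ξ : ℕ) + 1 ≠ r ∧ v ξ = 1
  · obtain ⟨ξ, hξ, hvξ⟩ := hone
    refine .inr ⟨ξ, hξ, ?_⟩
    simpa [hvξ] using Pi.eq_single_of_nonneg_of_apply_eq_sum hpos (hvξ.trans hsum.symm)
  · push Not at hone
    have hoff : ∀ i : Fin r, (i : ℕ) + 1 ≠ r → v i = nj l r j i := by
      intro i hi
      obtain ⟨k, hk⟩ := hfrac i hi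
      have hle : v i ≤ 1 := hsum ▸ single_le_sum (fun i _ => hpos i) (mem_univ i)
      rcases Int.eq_zero_or_of_add_div_mem_Icc hjl (hk ▸ hpos i) (hk ▸ hle) with
        rfl | ⟨rfl, rfl⟩
      · simp [hk, nj, hi]
      · exact absurd (by simp [hk]) (hone i hi)
    have hv : v = nj l r j := Pi.eq_of_sum_eq_of_forall_ne ⟨r - 1, by omega⟩
      (fun i hi => hoff i fun h => hi (Fin.ext (by simp; omega)))
      (by rw [hsum, sum_nj (by omega) hl])
    exact .inl ⟨j, le_div_of_nj_nonneg hr hl (hv ▸ hpos), hv⟩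

theorem nj_mem_segment (hl : l ≠ 0) {a b c : ℕ} (hab : a ≤ b) (hbc : b ≤ c) :
    nj l r b ∈ segment ℚ (nj l r a) (nj l r c) := by
  simp only [nj_eq_njLine hl]
  exact njLine_mem_segment (by gcongr) (by gcongr)

theorem nj_div_eq_njLine (hl : l ≠ 0) (hdvd : (r - 1) ∣ l) :
    nj l r (l / (r - 1)) = njLine r (1 / (r - 1)) := by
  obtain ⟨m, rfl⟩ := hdvd
  have hr : r - 1 ≠ 0 := left_ne_zero_of_mul hl
  have hm : m ≠ 0 := right_ne_zero_of_mul hl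
  rw [nj_eq_njLine hl, Nat.mul_div_cancel_left m (Nat.pos_of_ne_zero hr)]
  congr 1
  rw [Nat.cast_mul, Nat.cast_sub (by omega : 1 ≤ r)]
  field_simp
  simp

theorem eq_add_one_of_nj_mem (hr : 2 ≤ r) (hl : l ≠ 0)
    (haff : AffineIndependent ℚ (fun v : (B : Set (Fin r → ℚ)) => (v : Fin r → ℚ)))
    (hclosed : ∀ w ∈ convexHull ℚ (B : Set (Fin r → ℚ)), memN l r w → w ∈ B)
    {a b : ℕ} (ha : nj l r a ∈ B) (hb : nj l r b ∈ B) (hab : a < b) : b = a + 1 := by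
  by_contra hne
  have hseg := nj_mem_segment (r := r) hl (Nat.le_succ a) (by omega : a + 1 ≤ b)
  have hmid : nj l r (a + 1) ∈ B :=
    hclosed _ (segment_subset_convexHull ha hb hseg) (memN_nj hl _)
  have hinj := nj_injective hr hl
  refine haff.notMem_convexHull_sdiff_singleton hmid (segment_subset_convexHull ?_ ?_ hseg)
  · exact ⟨ha, fun h => by have := hinj h; omega⟩
  · exact ⟨hb, fun h => by have := hinj h; omega⟩

theorem nj_add_one_mem (hr : 2 ≤ r) (hl : l ≠ 0)
    (hclosed : ∀ w ∈ convexHull ℚ (B : Set (Fin r → ℚ)), memN l r w → w ∈ B)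
    (hface : ∀ ξ : Fin r, (ξ : ℕ) + 1 ≠ r → Pi.single ξ 1 ∈ B)
    {a : ℕ} (ha : nj l r a ∈ B) (haν : a < l / (r - 1)) : nj l r (a + 1) ∈ B := by
  refine hclosed _ ?_ (memN_nj hl _)
  have hcentroid : njLine r (1 / (r - 1)) ∈ convexHull ℚ (B : Set (Fin r → ℚ)) := by
    refine convexHull_mono ?_ (njLine_mem_convexHull_face hr)
    intro v hv
    obtain ⟨ξ, hξ, rfl⟩ := Finset.mem_image.1 hv
    exact hface ξ (Finset.mem_filter.1 hξ).2
  refine (convex_convexHull ℚ _).segment_subset (subset_convexHull ℚ _ ha) hcentroid ?_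
  have hmul : (a + 1) * (r - 1) ≤ l := (Nat.le_div_iff_mul_le (by omega)).1 haν
  have hmulQ : ((a : ℚ) + 1) * (r - 1) ≤ l := by
    have hcast := (Nat.cast_le (α := ℚ)).2 hmul
    push_cast [Nat.cast_sub (by omega : 1 ≤ r)] at hcast
    exact hcast
  rw [nj_eq_njLine hl, nj_eq_njLine hl]
  refine njLine_mem_segment (by gcongr; omega) ?_
  have hr1 : (0 : ℚ) < r - 1 := by rw [sub_pos]; exact_mod_cast hr
  rw [div_le_div_iff₀ (by positivity) hr1]
  push_cast
  linarith

theorem not_dvd_of_nj_mem (hr : 2 ≤ r) (hl : l ≠ 0)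
    (haff : AffineIndependent ℚ (fun v : (B : Set (Fin r → ℚ)) => (v : Fin r → ℚ)))
    (hface : ∀ ξ : Fin r, (ξ : ℕ) + 1 ≠ r →
      Pi.single ξ 1 ∈ B ∧ Pi.single ξ 1 ≠ nj l r (l / (r - 1)))
    (hν : nj l r (l / (r - 1)) ∈ B) : ¬ (r - 1) ∣ l := by
  intro hdvd
  refine haff.notMem_convexHull_sdiff_singleton hν ?_
  rw [nj_div_eq_njLine hl hdvd]
  refine convexHull_mono ?_ (njLine_mem_convexHull_face hr)
  intro v hv
  obtain ⟨ξ, hξ, rfl⟩ := Finset.mem_image.1 hv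
  obtain ⟨hξB, hξν⟩ := hface ξ (Finset.mem_filter.1 hξ).2
  exact ⟨hξB, by rw [← nj_div_eq_njLine hl hdvd]; exact hξν⟩

def njIndices (l r : ℕ) (B : Finset (Fin r → ℚ)) : Finset ℕ :=
  {j ∈ range (l / (r - 1) + 1) | nj l r j ∈ B}

-- For `r = 2` the vertex `e_1 = n⁽ˡ⁾` is counted in `njIndices` only.
def faceIndices (l r : ℕ) (B : Finset (Fin r → ℚ)) : Finset (Fin r) :=
  {ξ | (ξ : ℕ) + 1 ≠ r ∧ Pi.single ξ 1 ∈ B ∧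
    Pi.single ξ 1 ∉ (njIndices l r B).image (nj l r)}

theorem mem_njIndices {j : ℕ} : j ∈ njIndices l r B ↔ j ≤ l / (r - 1) ∧ nj l r j ∈ B := by
  simp [njIndices]

theorem faceIndices_subset :
    faceIndices l r B ⊆ ({ξ : Fin r | (ξ : ℕ) + 1 ≠ r} : Finset (Fin r)) :=
  fun _ hξ => by simp_all [faceIndices]

theorem card_faceIndices_le (hr : 1 ≤ r) : #(faceIndices l r B) ≤ r - 1 :=
  card_filter_val_add_one_ne hr ▸ card_le_card faceIndices_subset

theorem eq_image_njIndices_union_image_faceIndices (hr : 2 ≤ r) (hl : l ≠ 0)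
    (hB : ∀ v ∈ B, IsJuniorLatticePoint l r v) :
    B = (njIndices l r B).image (nj l r) ∪
      (faceIndices l r B).image fun ξ => (Pi.single ξ 1 : Fin r → ℚ) := by
  ext v
  simp only [mem_union, mem_image, faceIndices, mem_filter_univ, mem_njIndices]
  constructor
  · intro hv
    rcases (hB v hv).eq_nj_or_eq_single hr hl with ⟨j, hj, rfl⟩ | ⟨ξ, hξ, rfl⟩
    · exact .inl ⟨j, ⟨hj, hv⟩, rfl⟩
    · by_cases hin : ∃ j, (j ≤ l / (r - 1) ∧ nj l r j ∈ B) ∧ nj l r j = Pi.single ξ 1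
      · exact .inl hin
      · exact .inr ⟨ξ, ⟨hξ, hv, by simpa [mem_njIndices] using hin⟩, rfl⟩
  · rintro (⟨j, ⟨-, hj⟩, rfl⟩ | ⟨ξ, ⟨-, hξ, -⟩, rfl⟩) <;> assumption

theorem card_njIndices_add_card_faceIndices (hr : 2 ≤ r) (hl : l ≠ 0)
    (hB : ∀ v ∈ B, IsJuniorLatticePoint l r v) :
    #(njIndices l r B) + #(faceIndices l r B) = #B := by
  have hdisj : Disjoint ((njIndices l r B).image (nj l r))
      ((faceIndices l r B).image fun ξ => (Pi.single ξ 1 : Fin r → ℚ)) := by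
    rw [disjoint_right]
    rintro _ hv
    obtain ⟨ξ, hξ, rfl⟩ := mem_image.1 hv
    exact (mem_filter.1 hξ).2.2.2
  conv_rhs => rw [eq_image_njIndices_union_image_faceIndices hr hl hB]
  rw [card_union_of_disjoint hdisj, card_image_of_injective _ (nj_injective hr hl),
    card_image_of_injective _ (Pi.single_left_injective one_ne_zero)]

theorem njIndices_eq_singleton_or_pair (hr : 2 ≤ r) (hl : l ≠ 0)
    (haff : AffineIndependent ℚ (fun v : (B : Set (Fin r → ℚ)) => (v : Fin r → ℚ)))
    (hclosed : ∀ w ∈ convexHull ℚ (B : Set (Fin r → ℚ)), memN l r w → w ∈ B)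
    (hne : (njIndices l r B).Nonempty) :
    ∃ a, njIndices l r B = {a} ∨ njIndices l r B = {a, a + 1} := by
  set J := njIndices l r B
  set a := J.min' hne
  have ha : a ∈ J := J.min'_mem hne
  have hJ : ∀ b ∈ J, b = a ∨ b = a + 1 := fun b hb => by
    rcases (J.min'_le b hb).eq_or_lt with h | h
    · exact .inl h.symm
    · exact .inr (eq_add_one_of_nj_mem hr hl haff hclosed (mem_njIndices.1 ha).2
        (mem_njIndices.1 hb).2 h)
  refine ⟨a, ?_⟩
  by_cases ha1 : a + 1 ∈ J
  · refine .inr (ext fun b => ?_)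
    simp only [mem_insert, mem_singleton]
    exact ⟨hJ b, by rintro (rfl | rfl) <;> assumption⟩
  · refine .inl (ext fun b => ?_)
    simp only [mem_singleton]
    exact ⟨fun hb => (hJ b hb).resolve_right (by rintro rfl; exact ha1 hb),
      by rintro rfl; exact ha⟩

theorem not_dvd_and_eq_insert_nj_of_njIndices_eq_singleton (hr : 2 ≤ r) (hl : l ≠ 0)
    (hB : ∀ v ∈ B, IsJuniorLatticePoint l r v) (hcard : #B = r)
    (haff : AffineIndependent ℚ (fun v : (B : Set (Fin r → ℚ)) => (v : Fin r → ℚ)))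
    (hclosed : ∀ w ∈ convexHull ℚ (B : Set (Fin r → ℚ)), memN l r w → w ∈ B)
    {a : ℕ} (hJ : njIndices l r B = {a}) :
    ¬ (r - 1) ∣ l ∧ B = insert (nj l r (l / (r - 1)))
      (({ξ : Fin r | (ξ : ℕ) + 1 ≠ r} : Finset (Fin r)).image
        fun ξ => (Pi.single ξ 1 : Fin r → ℚ)) := by
  have hcount := card_njIndices_add_card_faceIndices hr hl hB
  rw [hJ, card_singleton, hcard] at hcount
  have hS : faceIndices l r B = ({ξ : Fin r | (ξ : ℕ) + 1 ≠ r} : Finset (Fin r)) :=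
    eq_of_subset_of_card_le faceIndices_subset
      (by rw [card_filter_val_add_one_ne (by omega)]; omega)
  have hface (ξ : Fin r) (hξ : (ξ : ℕ) + 1 ≠ r) :
      Pi.single ξ 1 ∈ B ∧ Pi.single ξ 1 ≠ nj l r a := by
    have hmem : ξ ∈ faceIndices l r B := by rw [hS]; simpa using hξ
    simp only [faceIndices, hJ, mem_filter_univ, image_singleton, mem_singleton] at hmem
    exact ⟨hmem.2.1, hmem.2.2⟩
  obtain ⟨haν, ha⟩ := mem_njIndices.1 (hJ ▸ mem_singleton_self a)
  obtain rfl : a = l / (r - 1) := by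
    by_contra hne
    have hsucc : a + 1 ∈ njIndices l r B := mem_njIndices.2
      ⟨by omega, nj_add_one_mem hr hl hclosed (fun ξ hξ => (hface ξ hξ).1) ha (by omega)⟩
    simp [hJ] at hsucc
  refine ⟨not_dvd_of_nj_mem hr hl haff hface ha, ?_⟩
  calc B = _ := eq_image_njIndices_union_image_faceIndices hr hl hB
    _ = _ := by rw [hJ, hS, image_singleton, insert_eq]

theorem exists_eq_insert_nj_of_njIndices_eq_pair (hr : 2 ≤ r) (hl : l ≠ 0)
    (hB : ∀ v ∈ B, IsJuniorLatticePoint l r v) (hcard : #B = r)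
    {a : ℕ} (hJ : njIndices l r B = {a, a + 1}) :
    ∃ (j : ℕ) (S : Finset (Fin r)), 1 ≤ j ∧ j ≤ l / (r - 1) ∧
      #S = r - 2 ∧ (∀ ξ ∈ S, (ξ : ℕ) + 1 ≠ r) ∧
      B = insert (nj l r (j - 1)) (insert (nj l r j)
        (S.image fun ξ => (Pi.single ξ 1 : Fin r → ℚ))) := by
  have hcount := card_njIndices_add_card_faceIndices hr hl hB
  rw [hJ, card_pair (by omega), hcard] at hcount
  have hsucc : a + 1 ∈ njIndices l r B := by simp [hJ]
  refine ⟨a + 1, faceIndices l r B, by omega, (mem_njIndices.1 hsucc).1, by omega,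
    fun ξ hξ => by simpa using faceIndices_subset hξ, ?_⟩
  calc B = _ := eq_image_njIndices_union_image_faceIndices hr hl hB
    _ = _ := by rw [hJ, image_insert, image_singleton, insert_union,
      singleton_union, Nat.add_sub_cancel]

end Junior

/-- **Uniqueness of the maximal triangulation of the junior simplex.**
Every elementary `(r−1)`-simplex with vertices among the lattice points of the
junior simplex is either one of the simplices `conv({n⁽ʲ⁻¹⁾, n⁽ʲ⁾} ∪ {e ξ : ξ ∈ S})`,
or (when `(r−1) ∤ l`) the last simplex `conv({n⁽ᵛ⁾, e 1, …, e (r−1)})`. -/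
theorem uniqueness_of_maximal_triangulation (l r : ℕ) (hr : 2 ≤ r) (hl : r ≤ l)
    (B : Finset (Fin r → ℚ)) (hcard : B.card = r)
    (hBin : ∀ v ∈ B, memN l r v ∧ (∀ i, 0 ≤ v i) ∧ ∑ i, v i = 1)
    (haff : AffineIndependent ℚ (fun v : (B : Set (Fin r → ℚ)) => (v : Fin r → ℚ)))
    (helem : {v | v ∈ convexHull ℚ (B : Set (Fin r → ℚ)) ∧ memN l r v}
        = (B : Set (Fin r → ℚ))) :
    (∃ (j : ℕ) (S : Finset (Fin r)), 1 ≤ j ∧ j ≤ l / (r - 1) ∧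
        S.card = r - 2 ∧ (∀ ξ ∈ S, (ξ : ℕ) + 1 ≠ r) ∧
        B = insert (nj l r (j - 1)) (insert (nj l r j)
              (S.image fun ξ => (Pi.single ξ 1 : Fin r → ℚ)))) ∨
    (¬ (r - 1) ∣ l ∧
        B = insert (nj l r (l / (r - 1)))
              ((Finset.univ.filter fun i : Fin r => (i : ℕ) + 1 ≠ r).image
                fun ξ => (Pi.single ξ 1 : Fin r → ℚ))) := by
  have hl0 : l ≠ 0 := by omega
  have hclosed : ∀ w ∈ convexHull ℚ (B : Set (Fin r → ℚ)), memN l r w → w ∈ B :=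
    fun w hw hN => Finset.mem_coe.1 (helem.subset ⟨hw, hN⟩)
  have hne : (njIndices l r B).Nonempty := by
    have hcount := card_njIndices_add_card_faceIndices hr hl0 hBin
    have hface := card_faceIndices_le (l := l) (B := B) (by omega : 1 ≤ r)
    rw [← card_pos]
    omega
  obtain ⟨a, hJ | hJ⟩ := njIndices_eq_singleton_or_pair hr hl0 haff hclosed hne
  · exact .inr
      (not_dvd_and_eq_insert_nj_of_njIndices_eq_singleton hr hl0 hBin hcard haff hclosed hJ)
  · exact .inl (exists_eq_insert_nj_of_njIndices_eq_pair hr hl0 hBin hcard hJ)
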